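/- Let ρ: SL(2,Z) → GL(d,C) be irreducible with d ≥ 2, and let υ be any multiplier system. Then the modular derivative D, acting componentwise on the graded space H(ρ,υ) of vector-valued modular forms for ρ and υ, is injective. -/

import Mathlib

set_option autoImplicit false

open Matrix MatrixGroups Complex

/-- The automorphy factor `J(γ,z) = c z + d` for `γ = [[a,b],[c,d]] ∈ SL(2,ℤ)`, `z ∈ ℍ`. -/
noncomputable def J (γ : SL(2,ℤ)) (z : UpperHalfPlane) : ℂ :=
  ((γ : Matrix (Fin 2) (Fin 2) ℤ) 1 0 : ℂ) * z + ((γ : Matrix (Fin 2) (Fin 2) ℤ) 1 1 : ℂ)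

/-- The Dedekind eta function `η(z) = q^{1/24} ∏_{n ≥ 1} (1 - q^n)`, `q = e^{2πiz}`,
regarded as a function of a complex variable (of interest for `Im z > 0`). -/
noncomputable def DedekindEta (z : ℂ) : ℂ :=
  Complex.exp (Real.pi * Complex.I * z / 12) *
    ∏' n : ℕ, (1 - Complex.exp (2 * Real.pi * Complex.I * ((n : ℂ) + 1) * z))

/-- The function `P(z) = (i/π) η'(z)/η(z)`. -/
noncomputable def Pfun (z : ℂ) : ℂ :=
  Complex.I / Real.pi * (deriv DedekindEta z / DedekindEta z)

/-- `υ : SL(2,ℤ) → ℂ` is a multiplier system of weight `k`: it takes values in the unit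
circle and `ν(γ,z) = υ(γ)(cz+d)^k` is a 1-cocycle (powers via the principal branch). -/
def IsMultiplierSystem (k : ℝ) (υ : SL(2,ℤ) → ℂ) : Prop :=
  (∀ γ, ‖υ γ‖ = 1) ∧
  ∀ γ σ : SL(2,ℤ), ∀ z : UpperHalfPlane,
    υ (γ * σ) * J (γ * σ) z ^ (k : ℂ) =
      υ γ * J γ (σ • z) ^ (k : ℂ) * (υ σ * J σ z ^ (k : ℂ))

/-- Holomorphy on the upper half-plane for a function of a complex variable. -/
def IsHolomorphicOnH (f : ℂ → ℂ) : Prop :=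
  ∀ z : ℂ, 0 < z.im → DifferentiableAt ℂ f z

/-- Moderate growth: `|f(x+iy)| ≤ y^N` for all `y > c`, for some positive `N`, `c`. -/
def IsModerateGrowth (f : ℂ → ℂ) : Prop :=
  ∃ (N : ℕ) (c : ℝ), 0 < N ∧ 0 < c ∧ ∀ z : ℂ, c < z.im → ‖f z‖ ≤ z.im ^ N

/-- A modular form of real weight `k` for the multiplier system `υ`: holomorphic on `ℍ`,
of moderate growth, and satisfying `f(γz) = υ(γ)(cz+d)^k f(z)`. -/
def IsModularFormMS (k : ℝ) (υ : SL(2,ℤ) → ℂ) (f : ℂ → ℂ) : Prop :=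
  IsHolomorphicOnH f ∧ IsModerateGrowth f ∧
    ∀ γ : SL(2,ℤ), ∀ z : UpperHalfPlane,
      f ((γ • z : UpperHalfPlane) : ℂ) = υ γ * J γ z ^ (k : ℂ) * f (z : ℂ)

/-- The modular derivative in weight `k`: `D_k f = (1/(2πi)) f' + k P f`. -/
noncomputable def Dk (k : ℝ) (f : ℂ → ℂ) : ℂ → ℂ :=
  fun z => 1 / (2 * Real.pi * Complex.I) * deriv f z + (k : ℂ) * Pfun z * f z

/-- A vector-valued modular form of weight `k` for the representation `ρ` and the
multiplier system `υ`: a vector of holomorphic, moderate-growth functions on `ℍ`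
satisfying `F(γz) = υ(γ)(cz+d)^k ρ(γ) F(z)`. -/
def IsVVModularForm {d : ℕ} (k : ℝ) (ρ : SL(2,ℤ) →* GL (Fin d) ℂ)
    (υ : SL(2,ℤ) → ℂ) (F : ℂ → Fin d → ℂ) : Prop :=
  (∀ i, IsHolomorphicOnH (fun z => F z i)) ∧
  (∀ i, IsModerateGrowth (fun z => F z i)) ∧
  ∀ γ : SL(2,ℤ), ∀ z : UpperHalfPlane,
    F ((γ • z : UpperHalfPlane) : ℂ) =
      fun i => υ γ * J γ z ^ (k : ℂ) *
        ((ρ γ).val.mulVec (F (z : ℂ))) i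

/-- Iterated modular derivative `D_k^n = D_{k+2(n-1)} ∘ ⋯ ∘ D_{k+2} ∘ D_k`. -/
noncomputable def DkIter (k : ℝ) : ℕ → (ℂ → ℂ) → ℂ → ℂ
  | 0 => fun f => f
  | n + 1 => fun f => Dk (k + 2 * n) (DkIter k n f)

/-- The modular Wronskian `W(F) = det (F, D_k F, …, D_k^{d-1} F)`. -/
noncomputable def ModularWronskian {d : ℕ} (k : ℝ) (F : ℂ → Fin d → ℂ) : ℂ → ℂ :=
  fun z => (Matrix.of fun i j : Fin d => DkIter k j (fun w => F w i) z).det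

/-- `ρ` is `T`-unitarizable: `ρ(T)` is conjugate to a unitary matrix. -/
def TUnitarizable {d : ℕ} (ρ : SL(2,ℤ) →* GL (Fin d) ℂ) : Prop :=
  ∃ u ∈ Matrix.unitaryGroup (Fin d) ℂ, ∃ P : GL (Fin d) ℂ,
    (ρ ModularGroup.T).val = P.val * u * (P⁻¹).val

/-- Irreducibility: the only invariant subspaces of `ℂ^d` are `0` and `ℂ^d`. -/
def RepIrreducible {d : ℕ} (ρ : SL(2,ℤ) →* GL (Fin d) ℂ) : Prop :=
  ∀ U : Submodule ℂ (Fin d → ℂ),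
    (∀ γ : SL(2,ℤ), ∀ v ∈ U, (ρ γ).val.mulVec v ∈ U) → U = ⊥ ∨ U = ⊤

/-- The modular derivative acting componentwise on vector-valued functions. -/
noncomputable def DkVec {d : ℕ} (k : ℝ) (F : ℂ → Fin d → ℂ) : ℂ → Fin d → ℂ :=
  fun z i => Dk k (fun w => F w i) z

/-! If `D_k F = 0`, every component satisfies `f' = -2πi k P f`, so any two components have
vanishing Wronskian; on the connected half-plane this makes them proportional, and `F` takes
values in one line `ℂ ∙ F z₀`. By the transformation law the span of the values of `F` is
`ρ`-invariant, hence `0` or everything; a line is not everything when `d ≥ 2`. -/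

open Set Filter Topology

theorem eqOn_div_mul_of_deriv_mul_eq {f g : ℂ → ℂ} {U : Set ℂ} (hU : IsOpen U)
    (hUc : IsPreconnected U) (hf : DifferentiableOn ℂ f U) (hg : DifferentiableOn ℂ g U)
    (hW : ∀ z ∈ U, deriv f z * g z = deriv g z * f z) {z₀ : ℂ} (hz₀ : z₀ ∈ U)
    (hg₀ : g z₀ ≠ 0) : EqOn f (fun z => f z₀ / g z₀ * g z) U := by
  obtain ⟨r, hr, hball⟩ : ∃ r > 0, Metric.ball z₀ r ⊆ U ∩ g ⁻¹' {0}ᶜ :=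
    Metric.isOpen_iff.1 (hg.continuousOn.isOpen_inter_preimage hU isOpen_compl_singleton)
      z₀ ⟨hz₀, hg₀⟩
  have hdiffAt : ∀ h : ℂ → ℂ, DifferentiableOn ℂ h U → ∀ z ∈ Metric.ball z₀ r,
      DifferentiableAt ℂ h z := fun h hh z hz =>
    hh.differentiableAt (hU.mem_nhds (hball hz).1)
  have hquot_const : ∀ z ∈ Metric.ball z₀ r, f z / g z = f z₀ / g z₀ := by
    refine fun z hz => Metric.isOpen_ball.is_const_of_deriv_eq_zero (f := f / g)
      (convex_ball z₀ r).isPreconnected ?_ ?_ hz (Metric.mem_ball_self hr)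
    · exact fun x hx => ((hdiffAt f hf x hx).div (hdiffAt g hg x hx)
        (hball hx).2).differentiableWithinAt
    · intro x hx
      rw [deriv_div (hdiffAt f hf x hx) (hdiffAt g hg x hx) (hball hx).2, hW x (hball hx).1]
      simp only [mul_comm, sub_self, zero_div, Pi.zero_apply]
  have hlocal : f =ᶠ[𝓝 z₀] fun z => f z₀ / g z₀ * g z := by
    filter_upwards [Metric.ball_mem_nhds z₀ hr] with z hz
    rw [← hquot_const z hz, div_mul_cancel₀ _ (hball hz).2]
  exact (hf.analyticOnNhd hU).eqOn_of_preconnected_of_eventuallyEq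
    (analyticOnNhd_const.mul (hg.analyticOnNhd hU)) hUc hz₀ hlocal

theorem deriv_mul_eq_of_Dk_eq_zero {k : ℝ} {f g : ℂ → ℂ} {z : ℂ} (hf : Dk k f z = 0)
    (hg : Dk k g z = 0) : deriv f z * g z = deriv g z * f z := by
  have h2πI : 2 * (Real.pi : ℂ) * I ≠ 0 := by simp [Real.pi_ne_zero, I_ne_zero]
  have hderiv : ∀ h : ℂ → ℂ, Dk k h z = 0 →
      deriv h z = -(2 * Real.pi * I * k * Pfun z) * h z := fun h hh => by
    rw [Dk] at hh
    field_simp at hh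
    linear_combination hh
  rw [hderiv f hf, hderiv g hg]
  ring

theorem mem_span_singleton_of_deriv_mul_eq {ι : Type*} {F : ℂ → ι → ℂ} {U : Set ℂ}
    (hU : IsOpen U) (hUc : IsPreconnected U) (hF : ∀ i, DifferentiableOn ℂ (fun z => F z i) U)
    (hW : ∀ i j, ∀ z ∈ U, deriv (fun w => F w i) z * F z j = deriv (fun w => F w j) z * F z i)
    {z₀ : ℂ} (hz₀ : z₀ ∈ U) (hF₀ : F z₀ ≠ 0) {z : ℂ} (hz : z ∈ U) : F z ∈ ℂ ∙ F z₀ := by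
  obtain ⟨i₀, hi₀⟩ := Function.ne_iff.1 hF₀
  refine Submodule.mem_span_singleton.2 ⟨F z i₀ / F z₀ i₀, funext fun i => ?_⟩
  have hprop : F z i = F z₀ i / F z₀ i₀ * F z i₀ :=
    eqOn_div_mul_of_deriv_mul_eq hU hUc (hF i) (hF i₀) (hW i i₀) hz₀ hi₀ hz
  rw [Pi.smul_apply, smul_eq_mul, hprop]
  ring

theorem mulVec_mem_span_range_of_automorphy {G X ι R : Type*} [Group G] [MulAction G X]
    [Fintype ι] [DecidableEq ι] [CommRing R] (ρ : G →* GL ι R) {F : X → ι → R} {c : G → X → R}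
    (hF : ∀ g x, F (g • x) = c g x • (ρ g).val *ᵥ F x) (g : G) {v : ι → R}
    (hv : v ∈ Submodule.span R (range F)) : (ρ g).val *ᵥ v ∈ Submodule.span R (range F) := by
  -- apply the law to `g⁻¹` at `g • x`; this avoids inverting the factor `c`
  have hgen : ∀ x, (ρ g).val *ᵥ F x = c g⁻¹ (g • x) • F (g • x) := fun x => by
    conv_lhs => rw [← inv_smul_smul g x, hF, mulVec_smul, mulVec_mulVec, ← Units.val_mul,
      ← map_mul, mul_inv_cancel, map_one, Units.val_one, one_mulVec]
  refine Submodule.span_induction (fun w ⟨x, hx⟩ => ?_) (by simp) (fun _ _ _ _ h₁ h₂ => ?_)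
    (fun a _ _ h => ?_) hv
  · rw [← hx, hgen]
    exact Submodule.smul_mem _ _ (Submodule.subset_span ⟨_, rfl⟩)
  · rw [mulVec_add]; exact add_mem h₁ h₂
  · rw [mulVec_smul]; exact Submodule.smul_mem _ a h

theorem span_singleton_ne_top_of_two_le_finrank {K V : Type*} [DivisionRing K] [AddCommGroup V]
    [Module K V] (h : 2 ≤ Module.finrank K V) (v : V) : K ∙ v ≠ ⊤ := by
  intro htop
  have := finrank_span_le_card (R := K) ({v} : Set V)
  rw [htop, finrank_top] at this
  simp only [toFinset_singleton, Finset.card_singleton] at this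
  omega

theorem modular_derivative_injective {d : ℕ} (hd : 2 ≤ d)
    (ρ : SL(2,ℤ) →* GL (Fin d) ℂ) (hρ : RepIrreducible ρ)
    (k : ℝ) (υ : SL(2,ℤ) → ℂ)
    (F : ℂ → Fin d → ℂ) (hF : IsVVModularForm k ρ υ F)
    (h0 : ∀ z : ℂ, 0 < z.im → DkVec k F z = 0) :
    ∀ z : ℂ, 0 < z.im → F z = 0 := by
  intro z₀ hz₀
  by_contra hF₀
  set U := Submodule.span ℂ (range fun τ : UpperHalfPlane => F τ)
  have hU_le : U ≤ ℂ ∙ F z₀ := Submodule.span_le.2 <| by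
    rintro _ ⟨τ, rfl⟩
    exact mem_span_singleton_of_deriv_mul_eq UpperHalfPlane.isOpen_upperHalfPlaneSet
      (convex_halfSpace_im_gt 0).isPreconnected
      (fun i z hz => (hF.1 i z hz).differentiableWithinAt)
      (fun i j z hz => deriv_mul_eq_of_Dk_eq_zero (congrFun (h0 z hz) i) (congrFun (h0 z hz) j))
      hz₀ hF₀ τ.im_pos
  rcases hρ U (fun γ v hv => mulVec_mem_span_range_of_automorphy ρ hF.2.2 γ hv) with hbot | htop
  · exact hF₀ ((Submodule.mem_bot ℂ).1 (hbot ▸ Submodule.subset_span ⟨⟨z₀, hz₀⟩, rfl⟩))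
  · exact span_singleton_ne_top_of_two_le_finrank (by simpa using hd) (F z₀)
      (top_le_iff.1 (htop ▸ hU_le))
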